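/- Let (A, V) be a normal box with section ω and f : M → N an isomorphism of representations. Then for every object a, the linear map f(ω_a) : M(a) → N(a) (evaluation of f at the section element) is an isomorphism of vector spaces. -/

import Mathlib

/-! Since `μ ω = ω ⊗ ω`, the composite `g f` evaluated at `ω` is `g(ω) ∘ f(ω)`, and since
`ι ω = 1`, the identity morphism evaluated at `ω` is the identity map. Hence `g(ω)` is a
two-sided inverse of `f(ω)`. -/

open MulOpposite TensorProduct

section Box

variable (k A V : Type*) [Field k] [Ring A] [Algebra k A]
  [AddCommGroup V] [Module k V] [Module A V] [Module Aᵐᵒᵖ V]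
  [IsScalarTower k A V] [IsScalarTower k Aᵐᵒᵖ V] [SMulCommClass A Aᵐᵒᵖ V]

/-- The submodule of balancing relations defining `V ⊗_A V` as a quotient of
`V ⊗_k V`. -/
def boxRel : Submodule k (V ⊗[k] V) :=
  Submodule.span k
    {z : V ⊗[k] V | ∃ (a : A) (v w : V), z = (op a • v) ⊗ₜ[k] w - v ⊗ₜ[k] (a • w)}

/-- The tensor product `V ⊗_A V` of the `A`-bimodule `V` with itself over `A`. -/
abbrev BoxTensor := (V ⊗[k] V) ⧸ boxRel k A V

/-- The class of a pure tensor `x ⊗ y` in `V ⊗_A V`. -/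
noncomputable def boxMk (x y : V) : BoxTensor k A V := Submodule.Quotient.mk (x ⊗ₜ[k] y)

variable {X : Type*} [AddCommGroup X] [Module k X]

/-- The universal property of `V ⊗_A V`: an `A`-balanced `k`-bilinear map on `V × V`
induces a linear map on `V ⊗_A V`. -/
noncomputable def boxLift (B : V →ₗ[k] V →ₗ[k] X)
    (hB : ∀ (a : A) (v w : V), B (op a • v) w = B v (a • w)) :
    BoxTensor k A V →ₗ[k] X :=
  Submodule.liftQ _ (TensorProduct.lift B) (by
    unfold boxRel
    rw [Submodule.span_le]
    rintro z ⟨a, v, w, rfl⟩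
    simp [SetLike.mem_coe, LinearMap.mem_ker, map_sub, TensorProduct.lift.tmul, hB])

variable {M N L : Type*}
  [AddCommGroup M] [Module k M] [AddCommGroup N] [Module k N]
  [AddCommGroup L] [Module k L]

/-- The bilinear map `(x, y) ↦ g(x) ∘ f(y)` underlying the composition of morphisms of
representations of a box. -/
noncomputable def compBil (g : V →ₗ[k] (N →ₗ[k] L)) (f : V →ₗ[k] (M →ₗ[k] N)) :
    V →ₗ[k] V →ₗ[k] (M →ₗ[k] L) :=
  LinearMap.mk₂ k (fun x y => (g x) ∘ₗ (f y))
    (by intros; simp [LinearMap.add_comp])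
    (by intros; simp [LinearMap.smul_comp])
    (by intros; simp [LinearMap.comp_add])
    (by intros; simp [LinearMap.comp_smul])

/-- Composition of morphisms of representations of a box, defined via the
comultiplication `μ`: `(g f)(v) = Σ g(v₍₁₎) ∘ f(v₍₂₎)`. -/
noncomputable def boxComp [Module A N] (μ : V →ₗ[k] BoxTensor k A V)
    (g : V →ₗ[k] (N →ₗ[k] L)) (f : V →ₗ[k] (M →ₗ[k] N))
    (hg : ∀ (a : A) (v : V) (n : N), g (op a • v) n = g v (a • n))
    (hf : ∀ (a : A) (v : V) (m : M), f (a • v) m = a • f v m) :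
    V →ₗ[k] (M →ₗ[k] L) :=
  (boxLift k A V (compBil k V g f) (by
    intro a v w
    ext m
    simp [compBil, hg, hf])) ∘ₗ μ

/-- The identity morphism of a representation `M`, defined via the counit `ι`:
`id_M(v) = (m ↦ ι(v) • m)`. -/
noncomputable def boxId (ι : V →ₗ[k] A)
    [Module A M] [IsScalarTower k A M] [SMulCommClass A k M] :
    V →ₗ[k] (M →ₗ[k] M) where
  toFun v :=
    { toFun := fun m => ι v • m
      map_add' := fun m m' => smul_add (ι v) m m'
      map_smul' := fun c m => by
        simp only [RingHom.id_apply]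
        exact (smul_comm c (ι v) m).symm }
  map_add' := by intro v v'; ext m; simp [add_smul]
  map_smul' := by intro c v; ext m; simp [smul_assoc]

end Box

section BoxLemmas

variable {k A V : Type*} [Field k] [Ring A] [AddCommGroup V] [Module k V]

theorem boxLift_boxMk [Module A V] [Module Aᵐᵒᵖ V] {X : Type*} [AddCommGroup X] [Module k X]
    (B : V →ₗ[k] V →ₗ[k] X) (hB : ∀ (a : A) (v w : V), B (op a • v) w = B v (a • w))
    (x y : V) : boxLift k A V B hB (boxMk k A V x y) = B x y := by
  rw [boxMk, boxLift, Submodule.liftQ_apply, TensorProduct.lift.tmul]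

theorem boxComp_apply_of_eq_boxMk [Module A V] [Module Aᵐᵒᵖ V] {M N L : Type*}
    [AddCommGroup M] [Module k M] [AddCommGroup N] [Module k N] [AddCommGroup L] [Module k L]
    [Module A N] (μ : V →ₗ[k] BoxTensor k A V) {v x y : V} (hv : μ v = boxMk k A V x y)
    (g : V →ₗ[k] (N →ₗ[k] L)) (f : V →ₗ[k] (M →ₗ[k] N))
    (hg : ∀ (a : A) (v : V) (n : N), g (op a • v) n = g v (a • n))
    (hf : ∀ (a : A) (v : V) (m : M), f (a • v) m = a • f v m) :
    boxComp k A V μ g f hg hf v = g x ∘ₗ f y := by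
  rw [boxComp, LinearMap.comp_apply, hv, boxLift_boxMk]
  rfl

theorem boxId_apply_of_eq_one [Algebra k A] {M : Type*} [AddCommGroup M] [Module k M]
    [Module A M] [IsScalarTower k A M] [SMulCommClass A k M]
    {ι : V →ₗ[k] A} {v : V} (hv : ι v = 1) :
    boxId k A V ι v = (LinearMap.id : M →ₗ[k] M) := by
  ext m
  simp [boxId, hv]

end BoxLemmas

theorem box_iso_eval_section_bijective_general
    {k A V : Type*} [Field k] [Ring A] [Algebra k A]
    [AddCommGroup V] [Module k V] [Module A V] [Module Aᵐᵒᵖ V]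
    {M N : Type*} [AddCommGroup M] [Module k M] [AddCommGroup N] [Module k N]
    [Module A M] [IsScalarTower k A M] [SMulCommClass A k M]
    [Module A N] [IsScalarTower k A N] [SMulCommClass A k N]
    (μ : V →ₗ[k] BoxTensor k A V) (ι : V →ₗ[k] A)
    (ω : V) (hω : ι ω = 1) (hωμ : μ ω = boxMk k A V ω ω)
    (f : V →ₗ[k] (M →ₗ[k] N)) (g : V →ₗ[k] (N →ₗ[k] M))
    (hfr : ∀ (a : A) (v : V) (m : M), f (op a • v) m = f v (a • m))
    (hgr : ∀ (a : A) (v : V) (n : N), g (op a • v) n = g v (a • n))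
    (hfl : ∀ (a : A) (v : V) (m : M), f (a • v) m = a • f v m)
    (hgl : ∀ (a : A) (v : V) (n : N), g (a • v) n = a • g v n)
    (hgf : boxComp k A V μ g f hgr hfl = boxId k A V ι)
    (hfg : boxComp k A V μ f g hfr hgl = boxId k A V ι) :
    Function.Bijective (f ω) := by
  have hgf_ω : g ω ∘ₗ f ω = LinearMap.id := by
    rw [← boxComp_apply_of_eq_boxMk μ hωμ g f hgr hfl, hgf, boxId_apply_of_eq_one hω]
  have hfg_ω : f ω ∘ₗ g ω = LinearMap.id := by
    rw [← boxComp_apply_of_eq_boxMk μ hωμ f g hfr hgl, hfg, boxId_apply_of_eq_one hω]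
  exact Function.bijective_iff_has_inverse.mpr
    ⟨g ω, LinearMap.congr_fun hgf_ω, LinearMap.congr_fun hfg_ω⟩

/-- If `f : M → N` is an isomorphism of representations of a normal box with section
`ω`, then the evaluation `f(ω) : M → N` is an isomorphism of vector spaces. -/
theorem box_iso_eval_section_bijective
    {k A V : Type*} [Field k] [Ring A] [Algebra k A]
    [AddCommGroup V] [Module k V] [Module A V] [Module Aᵐᵒᵖ V]
    [IsScalarTower k A V] [IsScalarTower k Aᵐᵒᵖ V] [SMulCommClass A Aᵐᵒᵖ V]
    {M N : Type*} [AddCommGroup M] [Module k M] [AddCommGroup N] [Module k N]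
    [Module A M] [IsScalarTower k A M] [SMulCommClass A k M]
    [Module A N] [IsScalarTower k A N] [SMulCommClass A k N]
    (μ : V →ₗ[k] BoxTensor k A V) (ι : V →ₗ[k] A)
    (ω : V) (hω : ι ω = 1) (hωμ : μ ω = boxMk k A V ω ω)
    (f : V →ₗ[k] (M →ₗ[k] N)) (g : V →ₗ[k] (N →ₗ[k] M))
    (hfr : ∀ (a : A) (v : V) (m : M), f (op a • v) m = f v (a • m))
    (hgr : ∀ (a : A) (v : V) (n : N), g (op a • v) n = g v (a • n))
    (hfl : ∀ (a : A) (v : V) (m : M), f (a • v) m = a • f v m)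
    (hgl : ∀ (a : A) (v : V) (n : N), g (a • v) n = a • g v n)
    (hgf : boxComp k A V μ g f hgr hfl = boxId k A V ι)
    (hfg : boxComp k A V μ f g hfr hgl = boxId k A V ι) :
    Function.Bijective (f ω) :=
  box_iso_eval_section_bijective_general μ ι ω hω hωμ f g hfr hgr hfl hgl hgf hfg
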